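/- arXiv:1810.03086 — 9 statements merged into one kernel-verified Lean document; each statement's English description precedes it below -/
import Mathlib

section
/- Let 𝔤 = K × 𝔞 × K be the double extension of (𝔞, B) by the derivation D. Then the bracket ⁅(u,a,v),(u',a',v')⁆_𝔤 := (B (D a) a', ⁅a,a'⁆ + v • D a' − v' • D a, 0) is alternating (⁅f,f⁆_𝔤 = 0 for every f ∈ 𝔤) and satisfies the Jacobi–Leibniz identity ⁅f,⁅g,h⁆_𝔤⁆_𝔤 = ⁅⁅f,g⁆_𝔤,h⁆_𝔤 + ⁅g,⁅f,h⁆_𝔤⁆_𝔤 for all f,g,h ∈ 𝔤; consequently 𝔤 with this bracket is a Lie algebra over K, and moreover x = (1,0,0) satisfies ⁅x,f⁆_𝔤 = 0 for all f ∈ 𝔤. -/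
/-!
The bracket on `K × 𝔞 × K` is `⁅a, a'⁆ + v • D a' - v' • D a` in the middle, twisted by the
2-cocycle `ω(a, a') = B (D a) a'` in the first slot, and it never reaches the last slot. It is
alternating because a `B`-skew map has `B (D a) a = 0` once `2` is invertible. In the Jacobi
identity the middle component holds because `D` is a derivation, and the first component is the
cocycle identity of `ω`, which follows from invariance of `B` and skewness of `D`.
-/

/-- The bracket of the double extension of `(𝔞, B)` by the derivation `D`
on the space `K × 𝔞 × K`. -/
def doubleExtBracket {K : Type*} [Field K] {L : Type*} [LieRing L] [LieAlgebra K L]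
    (B : L →ₗ[K] L →ₗ[K] K) (D : L →ₗ[K] L) (f g : K × L × K) : K × L × K :=
  (B (D f.2.1) g.2.1, ⁅f.2.1, g.2.1⁆ + f.2.2 • D g.2.1 - g.2.2 • D f.2.1, (0 : K))

theorem apply_self_eq_zero_of_skew {K : Type*} [Field K] {M : Type*} [AddCommGroup M]
    [Module K M] {B : M →ₗ[K] M →ₗ[K] K} {D : M →ₗ[K] M} (hchar : (2 : K) ≠ 0)
    (hsym : ∀ a b, B a b = B b a) (hDinv : ∀ a b, B (D a) b + B a (D b) = 0) (a : M) :
    B (D a) a = 0 := by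
  have h : (2 : K) * B (D a) a = 0 := by linear_combination hDinv a a + hsym (D a) a
  exact (mul_eq_zero.mp h).resolve_left hchar

section DoubleExtension

variable {K : Type*} [Field K] {L : Type*} [LieRing L] [LieAlgebra K L]
  {B : L →ₗ[K] L →ₗ[K] K} {D : L →ₗ[K] L}

theorem derivation_form_leibniz (hsym : ∀ a b : L, B a b = B b a)
    (hinv : ∀ a b c : L, B ⁅a, b⁆ c = B a ⁅b, c⁆)
    (hder : ∀ a b : L, D ⁅a, b⁆ = ⁅D a, b⁆ + ⁅a, D b⁆) (a b c : L) :
    B (D a) ⁅b, c⁆ = B (D ⁅a, b⁆) c + B (D b) ⁅a, c⁆ :=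
  calc B (D a) ⁅b, c⁆ = B ⁅D a, b⁆ c + B a (⁅D b, c⁆ + ⁅c, D b⁆) := by
        rw [← lie_skew c (D b), add_neg_cancel, map_zero, add_zero, hinv]
    _ = B (D ⁅a, b⁆) c + B (D b) ⁅a, c⁆ := by
        rw [hder, map_add, map_add, LinearMap.add_apply, hinv a (D b), hsym (D b), hinv a c,
          add_assoc]

theorem doubleExtBracket_self (hchar : (2 : K) ≠ 0) (hsym : ∀ a b : L, B a b = B b a)
    (hDinv : ∀ a b : L, B (D a) b + B a (D b) = 0) (f : K × L × K) :
    doubleExtBracket B D f f = 0 := by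
  simp [doubleExtBracket, apply_self_eq_zero_of_skew hchar hsym hDinv]

theorem doubleExtBracket_leibniz (hsym : ∀ a b : L, B a b = B b a)
    (hinv : ∀ a b c : L, B ⁅a, b⁆ c = B a ⁅b, c⁆)
    (hder : ∀ a b : L, D ⁅a, b⁆ = ⁅D a, b⁆ + ⁅a, D b⁆)
    (hDinv : ∀ a b : L, B (D a) b + B a (D b) = 0) (f g h : K × L × K) :
    doubleExtBracket B D f (doubleExtBracket B D g h) =
      doubleExtBracket B D (doubleExtBracket B D f g) h +
        doubleExtBracket B D g (doubleExtBracket B D f h) := by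
  obtain ⟨-, a, vf⟩ := f
  obtain ⟨-, b, vg⟩ := g
  obtain ⟨-, c, vh⟩ := h
  simp only [doubleExtBracket, Prod.mk_add_mk, Prod.mk.injEq]
  refine ⟨?cocycle, ?derivation, by ring⟩
  case cocycle =>
    simp only [map_add, map_sub, map_smul, LinearMap.add_apply, LinearMap.sub_apply,
      LinearMap.smul_apply, smul_eq_mul]
    linear_combination derivation_form_leibniz hsym hinv hder a b c + vg * hDinv (D a) c
      - vf * hDinv (D b) c - vh * hsym (D a) (D b)
  case derivation =>
    simp only [map_add, map_sub, map_smul, hder, lie_add, add_lie, lie_sub, sub_lie,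
      lie_smul, smul_lie, smul_add, smul_sub, smul_smul, zero_smul, sub_zero, lie_lie]
    linear_combination (norm := module) (-vh : K) • lie_skew (D a) b

theorem doubleExtBracket_one_zero_zero (f : K × L × K) :
    doubleExtBracket B D ((1 : K), (0 : L), (0 : K)) f = 0 := by
  simp [doubleExtBracket]

end DoubleExtension

theorem double_extension_is_lie_algebra
    {K : Type*} [Field K] (hchar : (2 : K) ≠ 0)
    {L : Type*} [LieRing L] [LieAlgebra K L]
    (B : L →ₗ[K] L →ₗ[K] K)
    (hsym : ∀ a b : L, B a b = B b a)
    (hinv : ∀ a b c : L, B ⁅a, b⁆ c = B a ⁅b, c⁆)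
    (D : L →ₗ[K] L)
    (hder : ∀ a b : L, D ⁅a, b⁆ = ⁅D a, b⁆ + ⁅a, D b⁆)
    (hDinv : ∀ a b : L, B (D a) b + B a (D b) = 0) :
    (∀ f : K × L × K, doubleExtBracket B D f f = 0) ∧
    (∀ f g h : K × L × K,
      doubleExtBracket B D f (doubleExtBracket B D g h) =
        doubleExtBracket B D (doubleExtBracket B D f g) h +
        doubleExtBracket B D g (doubleExtBracket B D f h)) ∧
    (∀ f : K × L × K, doubleExtBracket B D ((1 : K), (0 : L), (0 : K)) f = 0) :=
  ⟨doubleExtBracket_self hchar hsym hDinv, doubleExtBracket_leibniz hsym hinv hder hDinv,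
    doubleExtBracket_one_zero_zero⟩
end

section
/- Let 𝔤 = K × 𝔞 × K be the double extension of (𝔞, B) by the derivation D, and assume in addition that B is nondegenerate (B a b = 0 for all b implies a = 0). Define the bilinear form B_𝔤 on 𝔤 by B_𝔤 (u,a,v) (u',a',v') := B a a' + u·v' + u'·v. Then B_𝔤 is symmetric, invariant for the double-extension bracket (B_𝔤 ⁅f,g⁆_𝔤 h = B_𝔤 f ⁅g,h⁆_𝔤 for all f,g,h ∈ 𝔤), and nondegenerate. -/
/-- The natural bilinear form on the double extension. -/
def doubleExtForm {K : Type*} [Field K] {L : Type*} [LieRing L] [LieAlgebra K L]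
    (B : L →ₗ[K] L →ₗ[K] K) (f g : K × L × K) : K :=
  B f.2.1 g.2.1 + f.1 * g.2.2 + g.1 * f.2.2

section DoubleExtension

variable {K : Type*} [Field K] {L : Type*} [LieRing L] [LieAlgebra K L]
  {B : L →ₗ[K] L →ₗ[K] K}

theorem doubleExtForm_comm (hsym : ∀ a b : L, B a b = B b a) (f g : K × L × K) :
    doubleExtForm B f g = doubleExtForm B g f := by
  rw [doubleExtForm, doubleExtForm, hsym]
  ring

theorem doubleExtForm_bracket_left (hinv : ∀ a b c : L, B ⁅a, b⁆ c = B a ⁅b, c⁆)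
    {D : L →ₗ[K] L} (hDinv : ∀ a b : L, B (D a) b + B a (D b) = 0) (f g h : K × L × K) :
    doubleExtForm B (doubleExtBracket B D f g) h =
      doubleExtForm B f (doubleExtBracket B D g h) := by
  obtain ⟨u, a, v⟩ := f
  obtain ⟨u', a', v'⟩ := g
  obtain ⟨u'', a'', v''⟩ := h
  simp only [doubleExtForm, doubleExtBracket, map_add, map_sub, map_smul,
    LinearMap.add_apply, LinearMap.sub_apply, LinearMap.smul_apply, smul_eq_mul]
  linear_combination hinv a a' a'' - v' * hDinv a a'' + v'' * hDinv a a'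

theorem doubleExtForm_nondegenerate (hnondeg : ∀ a : L, (∀ b : L, B a b = 0) → a = 0)
    (f : K × L × K) (hf : ∀ g : K × L × K, doubleExtForm B f g = 0) : f = 0 := by
  obtain ⟨u, a, v⟩ := f
  have hu : u = 0 := by simpa [doubleExtForm] using hf (0, 0, 1)
  have hv : v = 0 := by simpa [doubleExtForm] using hf (1, 0, 0)
  have ha : a = 0 := hnondeg a fun b => by simpa [doubleExtForm] using hf (0, b, 0)
  simp [hu, hv, ha]

end DoubleExtension

theorem double_extension_form_is_NIS_general
    {K : Type*} [Field K]
    {L : Type*} [LieRing L] [LieAlgebra K L]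
    (B : L →ₗ[K] L →ₗ[K] K)
    (hsym : ∀ a b : L, B a b = B b a)
    (hinv : ∀ a b c : L, B ⁅a, b⁆ c = B a ⁅b, c⁆)
    (hnondeg : ∀ a : L, (∀ b : L, B a b = 0) → a = 0)
    (D : L →ₗ[K] L)
    (hDinv : ∀ a b : L, B (D a) b + B a (D b) = 0) :
    (∀ f g : K × L × K, doubleExtForm B f g = doubleExtForm B g f) ∧
    (∀ f g h : K × L × K,
      doubleExtForm B (doubleExtBracket B D f g) h =
        doubleExtForm B f (doubleExtBracket B D g h)) ∧
    (∀ f : K × L × K, (∀ g : K × L × K, doubleExtForm B f g = 0) → f = 0) :=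
  ⟨doubleExtForm_comm hsym, doubleExtForm_bracket_left hinv hDinv,
    doubleExtForm_nondegenerate hnondeg⟩

theorem double_extension_form_is_NIS
    {K : Type*} [Field K] (hchar : (2 : K) ≠ 0)
    {L : Type*} [LieRing L] [LieAlgebra K L]
    (B : L →ₗ[K] L →ₗ[K] K)
    (hsym : ∀ a b : L, B a b = B b a)
    (hinv : ∀ a b c : L, B ⁅a, b⁆ c = B a ⁅b, c⁆)
    (hnondeg : ∀ a : L, (∀ b : L, B a b = 0) → a = 0)
    (D : L →ₗ[K] L)
    (hder : ∀ a b : L, D ⁅a, b⁆ = ⁅D a, b⁆ + ⁅a, D b⁆)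
    (hDinv : ∀ a b : L, B (D a) b + B a (D b) = 0) :
    (∀ f g : K × L × K, doubleExtForm B f g = doubleExtForm B g f) ∧
    (∀ f g h : K × L × K,
      doubleExtForm B (doubleExtBracket B D f g) h =
        doubleExtForm B f (doubleExtBracket B D g h)) ∧
    (∀ f : K × L × K, (∀ g : K × L × K, doubleExtForm B f g = 0) → f = 0) :=
  double_extension_form_is_NIS_general B hsym hinv hnondeg D hDinv
end

section
/- Let 𝔤 = K × 𝔞 × K be the double extension of (𝔞, B) by the derivation D. Then for all c, a ∈ 𝔞 and every natural number n ≥ 1, the n-fold iterate of the adjoint map of (0,c,0) in 𝔤 satisfies (ad_𝔤 (0,c,0))^n (0,a,0) = (B (D c) ((ad c)^{n−1} a), (ad c)^n a, 0), where ad c denotes the adjoint map of c in 𝔞. -/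
section

variable {K : Type*} [Field K] {L : Type*} [LieRing L] [LieAlgebra K L]
  (B : L →ₗ[K] L →ₗ[K] K) (D : L →ₗ[K] L)

theorem doubleExtBracket_zero_left (c a : L) (u : K) :
    doubleExtBracket B D (0, c, 0) (u, a, 0) = (B (D c) a, ⁅c, a⁆, 0) := by
  simp [doubleExtBracket]

-- The `K`-components never feed back into the `𝔞`-component, so only the last step sees `B`.
theorem iterate_doubleExtBracket_zero_left_succ (c a : L) (u : K) (n : ℕ) :
    (doubleExtBracket B D (0, c, 0))^[n + 1] (u, a, 0) =
      (B (D c) ((fun b : L => ⁅c, b⁆)^[n] a), (fun b : L => ⁅c, b⁆)^[n + 1] a, 0) := by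
  induction n with
  | zero => exact doubleExtBracket_zero_left B D c a u
  | succ n ih =>
    rw [Function.iterate_succ_apply', ih, doubleExtBracket_zero_left,
      Function.iterate_succ_apply' (fun b : L => ⁅c, b⁆) (n + 1)]

end

theorem double_extension_iterated_ad_general
    {K : Type*} [Field K]
    {L : Type*} [LieRing L] [LieAlgebra K L]
    (B : L →ₗ[K] L →ₗ[K] K)
    (D : L →ₗ[K] L) :
    ∀ (c a : L) (n : ℕ), 1 ≤ n →
      (fun g : K × L × K => doubleExtBracket B D ((0 : K), c, (0 : K)) g)^[n]
          ((0 : K), a, (0 : K)) =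
        (B (D c) ((fun b : L => ⁅c, b⁆)^[n - 1] a), (fun b : L => ⁅c, b⁆)^[n] a, (0 : K)) := by
  rintro c a (_ | n) hn
  · omega
  · exact iterate_doubleExtBracket_zero_left_succ B D c a 0 n

theorem double_extension_iterated_ad
    {K : Type*} [Field K] (hchar : (2 : K) ≠ 0)
    {L : Type*} [LieRing L] [LieAlgebra K L]
    (B : L →ₗ[K] L →ₗ[K] K)
    (hsym : ∀ a b : L, B a b = B b a)
    (hinv : ∀ a b c : L, B ⁅a, b⁆ c = B a ⁅b, c⁆)
    (D : L →ₗ[K] L)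
    (hder : ∀ a b : L, D ⁅a, b⁆ = ⁅D a, b⁆ + ⁅a, D b⁆)
    (hDinv : ∀ a b : L, B (D a) b + B a (D b) = 0) :
    ∀ (c a : L) (n : ℕ), 1 ≤ n →
      (fun g : K × L × K => doubleExtBracket B D ((0 : K), c, (0 : K)) g)^[n]
          ((0 : K), a, (0 : K)) =
        (B (D c) ((fun b : L => ⁅c, b⁆)^[n - 1] a), (fun b : L => ⁅c, b⁆)^[n] a, (0 : K)) :=
  double_extension_iterated_ad_general B D
end

section
/- Let K be a field of characteristic p, where p is an odd prime. Let 𝔞 be a Lie algebra over K, B a symmetric invariant K-bilinear form on 𝔞, and D : 𝔞 → 𝔞 a derivation such that B is D-invariant. Then for every a ∈ 𝔞, B (D a) ((ad a)^{p−2} (D a)) = 0. -/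
/-!
For fixed `a`, invariance and antisymmetry of the bracket make `ad a` skew-adjoint for `B`, so
`B ((ad a)^n x) x = (-1)^n B x ((ad a)^n x)`. For odd `n` symmetry of `B` turns this into
`B x ((ad a)^n x) = -B x ((ad a)^n x)`, which forces it to vanish once `2 ≠ 0`. Since `p` is odd
and not `1`, both `n = p - 2` odd and `2 ≠ 0` in `K` hold.
-/

section SkewAdjoint

variable {R M : Type*} [CommRing R] [AddCommGroup M] [Module R M]

theorem apply_iterate_left_of_skew (B : M →ₗ[R] M →ₗ[R] R) {f : M → M}
    (hf : ∀ b c, B (f b) c = -B b (f c)) (n : ℕ) (b c : M) :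
    B (f^[n] b) c = (-1) ^ n * B b (f^[n] c) := by
  induction n generalizing b c with
  | zero => simp
  | succ n ih =>
    rw [Function.iterate_succ_apply, ih, hf, Function.iterate_succ_apply']
    ring

theorem apply_self_iterate_eq_zero_of_skew_of_odd [NoZeroDivisors R] (h2 : (2 : R) ≠ 0)
    (B : M →ₗ[R] M →ₗ[R] R) (hsym : ∀ b c, B b c = B c b) {f : M → M}
    (hf : ∀ b c, B (f b) c = -B b (f c)) {n : ℕ} (hn : Odd n) (x : M) :
    B x (f^[n] x) = 0 := by
  have hneg : B x (f^[n] x) = -B x (f^[n] x) := by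
    conv_lhs => rw [hsym, apply_iterate_left_of_skew B hf, hn.neg_one_pow, neg_one_mul]
  have : (2 : R) * B x (f^[n] x) = 0 := by linear_combination hneg
  exact (mul_eq_zero.mp this).resolve_left h2

end SkewAdjoint

theorem apply_lie_left_eq_neg_apply_lie_right {R L : Type*} [CommRing R] [LieRing L]
    [LieAlgebra R L] (B : L →ₗ[R] L →ₗ[R] R) (hinv : ∀ a b c : L, B ⁅a, b⁆ c = B a ⁅b, c⁆)
    (a b c : L) : B ⁅a, b⁆ c = -B b ⁅a, c⁆ := by
  rw [← lie_skew, map_neg, LinearMap.neg_apply, hinv]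

theorem form_D_ad_pow_self_eq_zero_general
    {K : Type*} [Field K] (p : ℕ) (hodd : Odd p) [CharP K p]
    {L : Type*} [LieRing L] [LieAlgebra K L]
    (B : L →ₗ[K] L →ₗ[K] K)
    (hsym : ∀ a b : L, B a b = B b a)
    (hinv : ∀ a b c : L, B ⁅a, b⁆ c = B a ⁅b, c⁆)
    (D : L →ₗ[K] L) :
    ∀ a : L, B (D a) ((fun b : L => ⁅a, b⁆)^[p - 2] (D a)) = 0 := by
  intro a
  have hp1 : p ≠ 1 := CharP.char_ne_one K p
  have hp2 : p ≠ 2 := by rintro rfl; exact Nat.not_odd_iff_even.mpr even_two hodd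
  have h2 : (2 : K) ≠ 0 := Ring.two_ne_zero (by rwa [ringChar.eq K p])
  have hn : Odd (p - 2) := Nat.Odd.sub_even (by have := hodd.pos; omega) hodd even_two
  exact apply_self_iterate_eq_zero_of_skew_of_odd h2 B hsym
    (apply_lie_left_eq_neg_apply_lie_right B hinv a) hn (D a)

theorem form_D_ad_pow_self_eq_zero
    {K : Type*} [Field K] (p : ℕ) (hp : Nat.Prime p) (hodd : Odd p) [CharP K p]
    {L : Type*} [LieRing L] [LieAlgebra K L]
    (B : L →ₗ[K] L →ₗ[K] K)
    (hsym : ∀ a b : L, B a b = B b a)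
    (hinv : ∀ a b c : L, B ⁅a, b⁆ c = B a ⁅b, c⁆)
    (D : L →ₗ[K] L)
    (hder : ∀ a b : L, D ⁅a, b⁆ = ⁅D a, b⁆ + ⁅a, D b⁆)
    (hDinv : ∀ a b : L, B (D a) b + B a (D b) = 0) :
    ∀ a : L, B (D a) ((fun b : L => ⁅a, b⁆)^[p - 2] (D a)) = 0 :=
  form_D_ad_pow_self_eq_zero_general p hodd B hsym hinv D
end

section
/- Let K be a field of characteristic p, p an odd prime, and let 𝔤 = K × 𝔞 × K be the double extension of (𝔞, B) by the derivation D. Suppose D has the p-property: there exist γ ∈ K and a₀ ∈ 𝔞 with D^p = γ • D + ad a₀ (equality of linear maps 𝔞 → 𝔞, where D^p is the p-fold composite of D) and D a₀ = 0. Then for every l ∈ K, the p-fold iterate of the adjoint of x* = (0,0,1) in 𝔤 equals the adjoint of (l, a₀, γ): (ad_𝔤 (0,0,1))^p f = ⁅(l, a₀, γ), f⁆_𝔤 for all f ∈ 𝔤. -/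
/-!
`ad x*` kills the two outer coordinates and acts as `D` on the middle one, so `(ad x*)^p` acts
as `D^p = γ • D + ad a₀` there; since `D a₀ = 0`, this is exactly how `ad (l, a₀, γ)` acts.
-/

section DoubleExtension

variable {K : Type*} [Field K] {L : Type*} [LieRing L] [LieAlgebra K L]
  (B : L →ₗ[K] L →ₗ[K] K) (D : L →ₗ[K] L)

theorem doubleExtBracket_xstar_apply (f : K × L × K) :
    doubleExtBracket B D (0, 0, 1) f = (0, D f.2.1, 0) := by
  simp [doubleExtBracket]

theorem semiconj_doubleExtBracket_xstar :
    Function.Semiconj (fun b : L => ((0 : K), b, (0 : K))) D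
      (doubleExtBracket B D (0, 0, 1)) :=
  fun b => (doubleExtBracket_xstar_apply B D (0, b, 0)).symm

theorem iterate_doubleExtBracket_xstar {n : ℕ} (hn : n ≠ 0) (f : K × L × K) :
    (doubleExtBracket B D (0, 0, 1))^[n] f = (0, D^[n] f.2.1, 0) := by
  obtain ⟨m, rfl⟩ := Nat.exists_eq_succ_of_ne_zero hn
  rw [Function.iterate_succ_apply, doubleExtBracket_xstar_apply,
    ← (semiconj_doubleExtBracket_xstar B D).iterate_right m (D f.2.1), Function.iterate_succ_apply]

theorem doubleExtBracket_apply_of_map_eq_zero {a₀ : L} (ha₀ : D a₀ = 0) (l γ : K)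
    (f : K × L × K) :
    doubleExtBracket B D (l, a₀, γ) f = (0, ⁅a₀, f.2.1⁆ + γ • D f.2.1, 0) := by
  simp [doubleExtBracket, ha₀]

end DoubleExtension

theorem iterated_ad_xstar_of_p_property_general
    {K : Type*} [Field K] (p : ℕ) (hp : Nat.Prime p)
    {L : Type*} [LieRing L] [LieAlgebra K L]
    (B : L →ₗ[K] L →ₗ[K] K)
    (D : L →ₗ[K] L)
    (γ : K) (a₀ : L)
    (hpprop : ∀ b : L, (fun y : L => D y)^[p] b = γ • D b + ⁅a₀, b⁆)
    (ha₀ : D a₀ = 0) :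
    ∀ (l : K) (f : K × L × K),
      (fun g : K × L × K => doubleExtBracket B D ((0 : K), (0 : L), (1 : K)) g)^[p] f =
        doubleExtBracket B D (l, a₀, γ) f := by
  intro l f
  rw [iterate_doubleExtBracket_xstar B D hp.ne_zero, hpprop,
    doubleExtBracket_apply_of_map_eq_zero B D ha₀, add_comm]

theorem iterated_ad_xstar_of_p_property
    {K : Type*} [Field K] (p : ℕ) (hp : Nat.Prime p) (hodd : Odd p) [CharP K p]
    {L : Type*} [LieRing L] [LieAlgebra K L]
    (B : L →ₗ[K] L →ₗ[K] K)
    (hsym : ∀ a b : L, B a b = B b a)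
    (hinv : ∀ a b c : L, B ⁅a, b⁆ c = B a ⁅b, c⁆)
    (D : L →ₗ[K] L)
    (hder : ∀ a b : L, D ⁅a, b⁆ = ⁅D a, b⁆ + ⁅a, D b⁆)
    (hDinv : ∀ a b : L, B (D a) b + B a (D b) = 0)
    (γ : K) (a₀ : L)
    (hpprop : ∀ b : L, (fun y : L => D y)^[p] b = γ • D b + ⁅a₀, b⁆)
    (ha₀ : D a₀ = 0) :
    ∀ (l : K) (f : K × L × K),
      (fun g : K × L × K => doubleExtBracket B D ((0 : K), (0 : L), (1 : K)) g)^[p] f =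
        doubleExtBracket B D (l, a₀, γ) f :=
  iterated_ad_xstar_of_p_property_general p hp B D γ a₀ hpprop ha₀
end

section
/- Let K be a field of characteristic p, p an odd prime, and let 𝔤 = K × 𝔞 × K be the double extension of (𝔞, B) by the derivation D. Let a ∈ 𝔞 and suppose s ∈ 𝔞 satisfies ⁅s, b⁆ = (ad a)^p b for all b ∈ 𝔞 and D s = (ad a)^{p−1} (D a). Then for every c ∈ K, the p-fold iterate of the adjoint of (0,a,0) in 𝔤 equals the adjoint of (c, s, 0): (ad_𝔤 (0,a,0))^p f = ⁅(c, s, 0), f⁆_𝔤 for all f ∈ 𝔤. -/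
/-!
Write `A = ad a` on `𝔞` and `f = (u, b, v)`. One bracket with `(0, a, 0)` sends `f` to
`(B (D a) b, A b - v • D a, 0)`, and on triples with last coordinate `0` the bracket acts as
`A` in the middle and records `B (D a) (A^n ·)` in the first coordinate. Hence after `p`
brackets the middle is `A^p b - v • A^(p-1) (D a) = ⁅s, b⁆ - v • D s` and the first coordinate
is `B (D a) (A^(p-1) b) - v • B (D a) (A^(p-2) (D a))`. Invariance of `B` makes `A`
skew-adjoint, so the first term is `B (A^(p-1) (D a)) b = B (D s) b` since `p - 1` is even,
while for odd `p - 2` symmetry of `B` forces `B x (A^(p-2) x) = -B x (A^(p-2) x)`, which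
vanishes because `2 ≠ 0` in `K`.
-/

section SkewAdjoint

variable {R M : Type*} [CommRing R] [AddCommGroup M] [Module R M]
  {B : M →ₗ[R] M →ₗ[R] R} {T : Module.End R M}

theorem apply_pow_eq_neg_one_pow_mul_of_skew (hT : ∀ x y, B (T x) y = -B x (T y)) (n : ℕ)
    (x y : M) : B x ((T ^ n) y) = (-1) ^ n * B ((T ^ n) x) y := by
  induction n generalizing y with
  | zero => simp
  | succ n ih =>
    rw [pow_succ, Module.End.mul_apply, ih, pow_mul_comm', Module.End.mul_apply]
    linear_combination (-1) ^ n * hT ((T ^ n) x) y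

theorem apply_pow_self_eq_zero_of_skew_of_odd [NoZeroDivisors R] (h2 : (2 : R) ≠ 0)
    (hB : ∀ x y, B x y = B y x) (hT : ∀ x y, B (T x) y = -B x (T y)) {n : ℕ} (hn : Odd n)
    (x : M) : B x ((T ^ n) x) = 0 := by
  have h := apply_pow_eq_neg_one_pow_mul_of_skew hT n x x
  rw [hn.neg_one_pow, hB ((T ^ n) x)] at h
  have h' : (2 : R) * B x ((T ^ n) x) = 0 := by linear_combination h
  exact (mul_eq_zero.mp h').resolve_left h2

end SkewAdjoint

theorem apply_ad_eq_neg_apply_ad_of_invariant {K L : Type*} [CommRing K] [LieRing L]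
    [LieAlgebra K L] {B : L →ₗ[K] L →ₗ[K] K} (hinv : ∀ a b c : L, B ⁅a, b⁆ c = B a ⁅b, c⁆)
    (a x y : L) :
    B (LieAlgebra.ad K L a x) y = -B x (LieAlgebra.ad K L a y) := by
  rw [LieAlgebra.ad_apply, LieAlgebra.ad_apply, ← lie_skew, map_neg, LinearMap.neg_apply, hinv]

section DoubleExtension

variable {K L : Type*} [Field K] [LieRing L] [LieAlgebra K L]
  (B : L →ₗ[K] L →ₗ[K] K) (D : L →ₗ[K] L)

theorem doubleExtBracket_mk_zero (u : K) (a : L) (g : K × L × K) :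
    doubleExtBracket B D (u, a, 0) g = (B (D a) g.2.1, ⁅a, g.2.1⁆ - g.2.2 • D a, 0) := by
  simp [doubleExtBracket]

theorem iterate_doubleExtBracket_mk_zero (u : K) (a : L) (n : ℕ) (x : K) (b : L) :
    (fun g => doubleExtBracket B D (u, a, 0) g)^[n + 1] (x, b, 0) =
      (B (D a) ((LieAlgebra.ad K L a ^ n) b), (LieAlgebra.ad K L a ^ (n + 1)) b, 0) := by
  induction n generalizing x b with
  | zero => simp [doubleExtBracket_mk_zero]
  | succ n ih =>
    rw [Function.iterate_succ_apply, doubleExtBracket_mk_zero, zero_smul, sub_zero, ih,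
      pow_succ _ n, pow_succ _ (n + 1), Module.End.mul_apply, Module.End.mul_apply]
    rfl

end DoubleExtension

theorem iterated_ad_of_p_power_element_general
    {K : Type*} [Field K] (p : ℕ) (hodd : Odd p) [CharP K p]
    {L : Type*} [LieRing L] [LieAlgebra K L]
    (B : L →ₗ[K] L →ₗ[K] K)
    (hsym : ∀ a b : L, B a b = B b a)
    (hinv : ∀ a b c : L, B ⁅a, b⁆ c = B a ⁅b, c⁆)
    (D : L →ₗ[K] L)
    (a s : L)
    (hs : ∀ b : L, ⁅s, b⁆ = (fun y : L => ⁅a, y⁆)^[p] b)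
    (hDs : D s = (fun y : L => ⁅a, y⁆)^[p - 1] (D a)) :
    ∀ (c : K) (f : K × L × K),
      (fun g : K × L × K => doubleExtBracket B D ((0 : K), a, (0 : K)) g)^[p] f =
        doubleExtBracket B D (c, s, (0 : K)) f := by
  rintro c ⟨u, b, v⟩
  have h2 : (2 : K) ≠ 0 := Ring.two_ne_zero <| by
    rw [ringChar.eq K p]; rintro rfl; exact absurd hodd (by decide)
  obtain ⟨k, rfl⟩ : ∃ k, p = k + 2 := ⟨p - 2, by
    have := CharP.char_ne_one K p; obtain ⟨m, rfl⟩ := hodd; omega⟩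
  have hk : Odd k := by simpa [Nat.odd_add] using hodd
  rw [Function.iterate_succ_apply, doubleExtBracket_mk_zero, iterate_doubleExtBracket_mk_zero,
    doubleExtBracket_mk_zero]
  set A := LieAlgebra.ad K L a
  have hA : ∀ x y, B (A x) y = -B x (A y) := apply_ad_eq_neg_apply_ad_of_invariant hinv a
  have hs' : ⁅s, b⁆ = (A ^ (k + 2)) b := by rw [hs, Module.End.pow_apply]; rfl
  have hDs' : D s = (A ^ (k + 1)) (D a) := by rw [hDs, Module.End.pow_apply]; rfl
  have hshift : ∀ n, (A ^ n) ⁅a, b⁆ = (A ^ (n + 1)) b := fun n => by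
    rw [pow_succ, Module.End.mul_apply]; rfl
  have hvanish : B (D a) ((A ^ k) (D a)) = 0 :=
    apply_pow_self_eq_zero_of_skew_of_odd h2 hsym hA hk _
  simp only [map_sub, map_smul, smul_eq_mul, hshift, hvanish, mul_zero, sub_zero, hs', hDs']
  rw [apply_pow_eq_neg_one_pow_mul_of_skew hA, hk.add_one.neg_one_pow, one_mul]

theorem iterated_ad_of_p_power_element
    {K : Type*} [Field K] (p : ℕ) (hp : Nat.Prime p) (hodd : Odd p) [CharP K p]
    {L : Type*} [LieRing L] [LieAlgebra K L]
    (B : L →ₗ[K] L →ₗ[K] K)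
    (hsym : ∀ a b : L, B a b = B b a)
    (hinv : ∀ a b c : L, B ⁅a, b⁆ c = B a ⁅b, c⁆)
    (D : L →ₗ[K] L)
    (hder : ∀ a b : L, D ⁅a, b⁆ = ⁅D a, b⁆ + ⁅a, D b⁆)
    (hDinv : ∀ a b : L, B (D a) b + B a (D b) = 0)
    (a s : L)
    (hs : ∀ b : L, ⁅s, b⁆ = (fun y : L => ⁅a, y⁆)^[p] b)
    (hDs : D s = (fun y : L => ⁅a, y⁆)^[p - 1] (D a)) :
    ∀ (c : K) (f : K × L × K),
      (fun g : K × L × K => doubleExtBracket B D ((0 : K), a, (0 : K)) g)^[p] f =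
        doubleExtBracket B D (c, s, (0 : K)) f :=
  iterated_ad_of_p_power_element_general p hodd B hsym hinv D a s hs hDs
end

section
/- Let K be a field of characteristic 3 and let 𝔤 = K × 𝔞 × K be the double extension of (𝔞, B) by the derivation D. Assume: (a) sq : 𝔞 → 𝔞 is a 3-structure on 𝔞, i.e. ⁅sq a, b⁆ = (ad a)³ b, sq (λ • a) = λ³ • sq a, and sq (a+b) = sq a + sq b + ⁅b,⁅b,a⁆⁆ + 2 • ⁅a,⁅b,a⁆⁆ for all a,b ∈ 𝔞, λ ∈ K; (b) D is restricted: D (sq a) = (ad a)² (D a) for all a; (c) D has the 3-property: D³ = γ • D + ad a₀ with D a₀ = 0, for some γ ∈ K and a₀ ∈ 𝔞; (d) b₀ ∈ 𝔞 satisfies ⁅b₀, a⁆ = 0 for all a ∈ 𝔞 and D b₀ = 0; (e) 𝒫 : 𝔞 → K satisfies 𝒫 (λ • a) = λ³ • 𝒫 a and 𝒫 (a+b) = 𝒫 a + 𝒫 b + B (D b) ⁅b,a⁆ + 2 • B (D a) ⁅b,a⁆ for all a,b ∈ 𝔞, λ ∈ K. Then for all m, l ∈ K there exists a map sq_𝔤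 : 𝔤 → 𝔤 which is a 3-structure on 𝔤, i.e. ⁅sq_𝔤 f, g⁆_𝔤 = (ad_𝔤 f)³ g, sq_𝔤 (λ • f) = λ³ • sq_𝔤 f, and sq_𝔤 (f+g) = sq_𝔤 f + sq_𝔤 g + ⁅g,⁅g,f⁆_𝔤⁆_𝔤 + 2 • ⁅f,⁅g,f⁆_𝔤⁆_𝔤 for all f,g ∈ 𝔤, λ ∈ K, and which satisfies sq_𝔤 (0,a,0) = (𝒫 a, sq a, 0) for all a ∈ 𝔞, sq_𝔤 (0,0,1) = (l, a₀, γ), and sq_𝔤 (1,0,0) = (m, b₀, 0). -/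
open LieAlgebra

attribute [local instance] LieRing.ofAssociativeRing

theorem add_pow_three_of_three_eq_zero {R : Type*} [Ring R] (h3 : (3 : R) = 0) (x y : R) :
    (x + y) ^ 3 = x ^ 3 + y ^ 3 + ⁅x, ⁅x, y⁆⁆ + ⁅y, ⁅y, x⁆⁆ := by
  have h : (x + y) ^ 3 =
      x ^ 3 + y ^ 3 + ⁅x, ⁅x, y⁆⁆ + ⁅y, ⁅y, x⁆⁆ + 3 * (x * y * x + y * x * y) := by
    simp only [Ring.lie_def]
    noncomm_ring
  rwa [h3, zero_mul, add_zero] at h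

section DoubleExtension

variable {K : Type*} [Field K] {L : Type*} [LieRing L] [LieAlgebra K L]
  {B : L →ₗ[K] L →ₗ[K] K} {D : L →ₗ[K] L}

theorem lie_ad_of_derivation (hder : ∀ a b : L, D ⁅a, b⁆ = ⁅D a, b⁆ + ⁅a, D b⁆) (x : L) :
    ⁅D, ad K L x⁆ = ad K L (D x) := by
  ext y
  simp [LieRing.of_associative_ring_bracket, hder]

theorem form_apply_lie_self_left (hinv : ∀ a b c : L, B ⁅a, b⁆ c = B a ⁅b, c⁆) (x y : L) :
    B x ⁅x, y⁆ = 0 := by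
  rw [← hinv, lie_self, map_zero, LinearMap.zero_apply]

theorem form_apply_lie_self_right (hinv : ∀ a b c : L, B ⁅a, b⁆ c = B a ⁅b, c⁆) (x y : L) :
    B x ⁅y, x⁆ = 0 := by
  rw [← lie_skew, map_neg, form_apply_lie_self_left hinv, neg_zero]

theorem form_apply_self_derivation (h2 : (2 : K) ≠ 0) (hsym : ∀ a b : L, B a b = B b a)
    (hDinv : ∀ a b : L, B (D a) b + B a (D b) = 0) (x : L) : B x (D x) = 0 := by
  have h := hDinv x x
  rw [hsym] at h
  have h' : (2 : K) * B x (D x) = 0 := by linear_combination h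
  exact (mul_eq_zero.mp h').resolve_left h2

def doubleExtAd (D : L →ₗ[K] L) (a : L) (v : K) : Module.End K L :=
  ad K L a + v • D

@[simp]
theorem doubleExtAd_apply (a : L) (v : K) (y : L) : doubleExtAd D a v y = ⁅a, y⁆ + v • D y :=
  rfl

theorem doubleExtBracket_eq (f g : K × L × K) :
    doubleExtBracket B D f g =
      (B (D f.2.1) g.2.1, doubleExtAd D f.2.1 f.2.2 g.2.1 - g.2.2 • D f.2.1, 0) :=
  rfl

theorem form_apply_doubleExtAd (hinv : ∀ a b c : L, B ⁅a, b⁆ c = B a ⁅b, c⁆)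
    (hDinv : ∀ a b : L, B (D a) b + B a (D b) = 0) (a : L) (v : K) (x y : L) :
    B x (doubleExtAd D a v y) = -B (doubleExtAd D a v x) y := by
  have h := hDinv x y
  simp only [doubleExtAd_apply, map_add, map_smul, LinearMap.add_apply, LinearMap.smul_apply,
    smul_eq_mul, ← hinv, ← lie_skew a x, map_neg, LinearMap.neg_apply]
  linear_combination v * h

theorem form_derivation_doubleExtAd_derivation (h2 : (2 : K) ≠ 0)
    (hsym : ∀ a b : L, B a b = B b a) (hinv : ∀ a b c : L, B ⁅a, b⁆ c = B a ⁅b, c⁆)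
    (hDinv : ∀ a b : L, B (D a) b + B a (D b) = 0) (a : L) (v : K) :
    B (D a) (doubleExtAd D a v (D a)) = 0 := by
  rw [doubleExtAd_apply, map_add, map_smul, form_apply_lie_self_right hinv,
    form_apply_self_derivation h2 hsym hDinv, smul_zero, add_zero]

variable (D) in
def doubleExtSqMid (sq : L → L) (a₀ a : L) (v : K) : L :=
  sq a - v • ⁅a, D a⁆ + v ^ 2 • D (D a) + v ^ 3 • a₀

theorem doubleExtAd_pow_three [CharP K 3] (hder : ∀ a b : L, D ⁅a, b⁆ = ⁅D a, b⁆ + ⁅a, D b⁆)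
    {sq : L → L} (hsq_ad : ∀ a b : L, ⁅sq a, b⁆ = ⁅a, ⁅a, ⁅a, b⁆⁆⁆)
    {γ : K} {a₀ : L} (hpprop : ∀ b : L, D (D (D b)) = γ • D b + ⁅a₀, b⁆) (a : L) (v : K) :
    doubleExtAd D a v ^ 3 = ad K L (doubleExtSqMid D sq a₀ a v) + (γ * v ^ 3) • D := by
  have h3 : (3 : Module.End K L) = 0 := by
    have h3K : (3 : K) = 0 := by exact_mod_cast CharP.cast_eq_zero K 3
    rw [← map_ofNat (algebraMap K (Module.End K L)) 3, h3K, map_zero]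
  have had3 : ad K L a ^ 3 = ad K L (sq a) := by
    ext b
    simp [pow_succ, hsq_ad]
  have hD3 : D ^ 3 = γ • D + ad K L a₀ := by
    ext b
    simp [pow_succ, hpprop]
  have hvD : ∀ x y : L, (v • D) ⁅x, y⁆ = ⁅(v • D) x, y⁆ + ⁅x, (v • D) y⁆ := by
    intro x y
    simp [hder]
  rw [doubleExtAd, add_pow_three_of_three_eq_zero h3, had3, smul_pow, hD3,
    lie_ad_of_derivation hvD, lie_ad_of_derivation hvD, ← lie_skew (ad K L a) (v • D),
    lie_ad_of_derivation hvD, lie_neg, ← LieHom.map_lie]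
  simp only [doubleExtSqMid, LinearMap.smul_apply, map_add, map_sub, map_smul, lie_smul,
    smul_add]
  module

theorem derivation_doubleExtSqMid [CharP K 3]
    (hder : ∀ a b : L, D ⁅a, b⁆ = ⁅D a, b⁆ + ⁅a, D b⁆)
    {sq : L → L} (hres : ∀ a : L, D (sq a) = ⁅a, ⁅a, D a⁆⁆)
    {γ : K} {a₀ : L} (hpprop : ∀ b : L, D (D (D b)) = γ • D b + ⁅a₀, b⁆) (ha₀ : D a₀ = 0)
    (a : L) (v : K) :
    D (doubleExtSqMid D sq a₀ a v) = doubleExtAd D a v (doubleExtAd D a v (D a)) := by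
  have h3 : (3 : K) = 0 := by exact_mod_cast CharP.cast_eq_zero K 3
  simp only [doubleExtSqMid, doubleExtAd_apply, map_add, map_sub, map_smul, hder, hres, hpprop,
    ha₀, lie_self, smul_add, smul_zero, smul_smul]
  -- the two sides differ by `3 v ⁅a, D (D a)⁆`
  linear_combination (norm := module) h3 • (-v • ⁅a, D (D a)⁆)

variable (B D) in
def doubleExtSq (sq : L → L) (P : L → K) (γ : K) (a₀ b₀ : L) (m l : K) (f : K × L × K) :
    K × L × K :=
  (P f.2.1 + m * f.1 ^ 3 + l * f.2.2 ^ 3 + 2 * f.2.2 * B (D f.2.1) (D f.2.1),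
    doubleExtSqMid D sq a₀ f.2.1 f.2.2 + f.1 ^ 3 • b₀, γ * f.2.2 ^ 3)

theorem doubleExtBracket_doubleExtSq [CharP K 3] (hsym : ∀ a b : L, B a b = B b a)
    (hinv : ∀ a b c : L, B ⁅a, b⁆ c = B a ⁅b, c⁆)
    (hder : ∀ a b : L, D ⁅a, b⁆ = ⁅D a, b⁆ + ⁅a, D b⁆)
    (hDinv : ∀ a b : L, B (D a) b + B a (D b) = 0)
    {sq : L → L} (hsq_ad : ∀ a b : L, ⁅sq a, b⁆ = ⁅a, ⁅a, ⁅a, b⁆⁆⁆)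
    (hres : ∀ a : L, D (sq a) = ⁅a, ⁅a, D a⁆⁆)
    {γ : K} {a₀ : L} (hpprop : ∀ b : L, D (D (D b)) = γ • D b + ⁅a₀, b⁆) (ha₀ : D a₀ = 0)
    {b₀ : L} (hb₀c : ∀ a : L, ⁅b₀, a⁆ = 0) (hb₀ : D b₀ = 0) (P : L → K) (m l : K)
    (f g : K × L × K) :
    doubleExtBracket B D (doubleExtSq B D sq P γ a₀ b₀ m l f) g =
      doubleExtBracket B D f (doubleExtBracket B D f (doubleExtBracket B D f g)) := by
  obtain ⟨u, a, v⟩ := f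
  obtain ⟨u', a', v'⟩ := g
  have h2 : (2 : K) ≠ 0 := by grind
  simp only [doubleExtBracket_eq, doubleExtSq, zero_smul, sub_zero, Prod.mk.injEq, and_true]
  have hDA : D (doubleExtSqMid D sq a₀ a v + u ^ 3 • b₀) =
      doubleExtAd D a v (doubleExtAd D a v (D a)) := by
    rw [map_add, map_smul, hb₀, smul_zero, add_zero, derivation_doubleExtSqMid hder hres hpprop ha₀]
  have hT3 : doubleExtAd D a v (doubleExtAd D a v (doubleExtAd D a v a')) =
      doubleExtAd D (doubleExtSqMid D sq a₀ a v + u ^ 3 • b₀) (γ * v ^ 3) a' := by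
    rw [doubleExtAd_apply (doubleExtSqMid D sq a₀ a v + u ^ 3 • b₀), add_lie, smul_lie, hb₀c,
      smul_zero, add_zero]
    exact LinearMap.congr_fun (doubleExtAd_pow_three hder hsq_ad hpprop a v) a'
  constructor
  · rw [hDA, map_sub, map_smul, map_sub, map_smul,
      form_derivation_doubleExtAd_derivation h2 hsym hinv hDinv, smul_zero, sub_zero,
      form_apply_doubleExtAd hinv hDinv a v (D a), form_apply_doubleExtAd hinv hDinv a v, neg_neg]
  · rw [hDA, map_sub, map_smul, map_sub, map_smul, hT3]

theorem doubleExtSqMid_smul {sq : L → L} (hsq_smul : ∀ (l : K) (a : L), sq (l • a) = l ^ 3 • sq a)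
    (a₀ : L) (c : K) (a : L) (v : K) :
    doubleExtSqMid D sq a₀ (c • a) (c * v) = c ^ 3 • doubleExtSqMid D sq a₀ a v := by
  simp only [doubleExtSqMid, hsq_smul, map_smul, lie_smul, smul_lie, smul_add, smul_sub, smul_smul]
  module

theorem doubleExtSq_smul {sq : L → L} (hsq_smul : ∀ (l : K) (a : L), sq (l • a) = l ^ 3 • sq a)
    {P : L → K} (hP_smul : ∀ (l : K) (a : L), P (l • a) = l ^ 3 * P a)
    (γ : K) (a₀ b₀ : L) (m l c : K) (f : K × L × K) :
    doubleExtSq B D sq P γ a₀ b₀ m l (c • f) = c ^ 3 • doubleExtSq B D sq P γ a₀ b₀ m l f := by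
  obtain ⟨u, a, v⟩ := f
  simp only [doubleExtSq, Prod.smul_mk, smul_eq_mul, doubleExtSqMid_smul hsq_smul, hP_smul,
    map_smul, LinearMap.smul_apply, smul_add, smul_smul, Prod.mk.injEq]
  exact ⟨by ring, by module, by ring⟩

theorem doubleExtSqMid_add [CharP K 3] (hder : ∀ a b : L, D ⁅a, b⁆ = ⁅D a, b⁆ + ⁅a, D b⁆)
    {sq : L → L}
    (hsq_add : ∀ a b : L, sq (a + b) = sq a + sq b + ⁅b, ⁅b, a⁆⁆ + (2 : K) • ⁅a, ⁅b, a⁆⁆)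
    (a₀ a a' : L) (v v' : K) :
    doubleExtSqMid D sq a₀ (a + a') (v + v') =
      doubleExtSqMid D sq a₀ a v + doubleExtSqMid D sq a₀ a' v' +
        doubleExtAd D a' v' (doubleExtAd D a' v' a - v • D a') +
        (2 : K) • doubleExtAd D a v (doubleExtAd D a' v' a - v • D a') := by
  simp only [doubleExtSqMid, doubleExtAd_apply, hsq_add, map_add, map_sub, map_smul, hder,
    lie_add, add_lie, smul_add, smul_sub]
  rw [← lie_skew a (D a')]
  match_scalars <;> grind

theorem doubleExtSq_add_fst [CharP K 3] (hsym : ∀ a b : L, B a b = B b a)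
    {P : L → K}
    (hP_add : ∀ a b : L, P (a + b) = P a + P b + B (D b) ⁅b, a⁆ + (2 : K) * B (D a) ⁅b, a⁆)
    (m l u u' : K) (a a' : L) (v v' : K) :
    P (a + a') + m * (u + u') ^ 3 + l * (v + v') ^ 3 +
        2 * (v + v') * B (D (a + a')) (D (a + a')) =
      (P a + m * u ^ 3 + l * v ^ 3 + 2 * v * B (D a) (D a)) +
        (P a' + m * u' ^ 3 + l * v' ^ 3 + 2 * v' * B (D a') (D a')) +
        B (D a') (doubleExtAd D a' v' a - v • D a') +
        2 * B (D a) (doubleExtAd D a' v' a - v • D a') := by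
  have h := hsym (D a') (D a)
  simp only [hP_add, doubleExtAd_apply, map_add, map_sub, map_smul, LinearMap.add_apply,
    smul_eq_mul] at h ⊢
  grind

theorem doubleExtSq_add [CharP K 3] (hsym : ∀ a b : L, B a b = B b a)
    (hder : ∀ a b : L, D ⁅a, b⁆ = ⁅D a, b⁆ + ⁅a, D b⁆) {sq : L → L}
    (hsq_add : ∀ a b : L, sq (a + b) = sq a + sq b + ⁅b, ⁅b, a⁆⁆ + (2 : K) • ⁅a, ⁅b, a⁆⁆)
    {P : L → K}
    (hP_add : ∀ a b : L, P (a + b) = P a + P b + B (D b) ⁅b, a⁆ + (2 : K) * B (D a) ⁅b, a⁆)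
    (γ : K) (a₀ b₀ : L) (m l : K) (f g : K × L × K) :
    doubleExtSq B D sq P γ a₀ b₀ m l (f + g) =
      doubleExtSq B D sq P γ a₀ b₀ m l f + doubleExtSq B D sq P γ a₀ b₀ m l g +
        doubleExtBracket B D g (doubleExtBracket B D g f) +
        (2 : K) • doubleExtBracket B D f (doubleExtBracket B D g f) := by
  obtain ⟨u, a, v⟩ := f
  obtain ⟨u', a', v'⟩ := g
  simp only [doubleExtBracket_eq, doubleExtSq, Prod.mk_add_mk, Prod.smul_mk, zero_smul, sub_zero,
    smul_eq_mul, Prod.mk.injEq]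
  refine ⟨doubleExtSq_add_fst hsym hP_add m l u u' a a' v v', ?_, ?_⟩
  · rw [doubleExtSqMid_add hder hsq_add, add_pow_char]
    module
  · rw [add_pow_char]
    ring

end DoubleExtension

theorem three_structure_on_double_extension
    {K : Type*} [Field K] [CharP K 3]
    {L : Type*} [LieRing L] [LieAlgebra K L]
    (B : L →ₗ[K] L →ₗ[K] K)
    (hsym : ∀ a b : L, B a b = B b a)
    (hinv : ∀ a b c : L, B ⁅a, b⁆ c = B a ⁅b, c⁆)
    (D : L →ₗ[K] L)
    (hder : ∀ a b : L, D ⁅a, b⁆ = ⁅D a, b⁆ + ⁅a, D b⁆)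
    (hDinv : ∀ a b : L, B (D a) b + B a (D b) = 0)
    -- (a) a 3-structure on 𝔞
    (sq : L → L)
    (hsq_ad : ∀ a b : L, ⁅sq a, b⁆ = ⁅a, ⁅a, ⁅a, b⁆⁆⁆)
    (hsq_smul : ∀ (l : K) (a : L), sq (l • a) = l ^ 3 • sq a)
    (hsq_add : ∀ a b : L, sq (a + b) = sq a + sq b + ⁅b, ⁅b, a⁆⁆ + (2 : K) • ⁅a, ⁅b, a⁆⁆)
    -- (b) D is restricted
    (hres : ∀ a : L, D (sq a) = ⁅a, ⁅a, D a⁆⁆)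
    -- (c) the 3-property
    (γ : K) (a₀ : L)
    (hpprop : ∀ b : L, D (D (D b)) = γ • D b + ⁅a₀, b⁆)
    (ha₀ : D a₀ = 0)
    -- (d) a central element killed by D
    (b₀ : L) (hb₀c : ∀ a : L, ⁅b₀, a⁆ = 0) (hb₀ : D b₀ = 0)
    -- (e) the map 𝒫
    (P : L → K)
    (hP_smul : ∀ (l : K) (a : L), P (l • a) = l ^ 3 * P a)
    (hP_add : ∀ a b : L,
      P (a + b) = P a + P b + B (D b) ⁅b, a⁆ + (2 : K) * B (D a) ⁅b, a⁆) :
    ∀ m l : K, ∃ sqg : K × L × K → K × L × K,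
      (∀ f g : K × L × K,
        doubleExtBracket B D (sqg f) g =
          doubleExtBracket B D f (doubleExtBracket B D f (doubleExtBracket B D f g))) ∧
      (∀ (lam : K) (f : K × L × K), sqg (lam • f) = lam ^ 3 • sqg f) ∧
      (∀ f g : K × L × K,
        sqg (f + g) = sqg f + sqg g + doubleExtBracket B D g (doubleExtBracket B D g f) +
          (2 : K) • doubleExtBracket B D f (doubleExtBracket B D g f)) ∧
      (∀ a : L, sqg ((0 : K), a, (0 : K)) = (P a, sq a, (0 : K))) ∧
      sqg ((0 : K), (0 : L), (1 : K)) = (l, a₀, γ) ∧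
      sqg ((1 : K), (0 : L), (0 : K)) = (m, b₀, (0 : K)) := by
  intro m l
  have hsq0 : sq 0 = 0 := by simpa using hsq_smul 0 0
  have hP0 : P 0 = 0 := by simpa using hP_smul 0 0
  refine ⟨doubleExtSq B D sq P γ a₀ b₀ m l,
    doubleExtBracket_doubleExtSq hsym hinv hder hDinv hsq_ad hres hpprop ha₀ hb₀c hb₀ P m l,
    doubleExtSq_smul hsq_smul hP_smul γ a₀ b₀ m l,
    doubleExtSq_add hsym hder hsq_add hP_add γ a₀ b₀ m l, fun a => ?_, ?_, ?_⟩ <;>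
  simp [doubleExtSq, doubleExtSqMid, hsq0, hP0]
end

section
/- Let K be a field of characteristic p, p a prime with p ≠ 2, and let 𝔤 = K × 𝔞 × K be the double extension of (𝔞, B) by the derivation D. Let a ∈ 𝔞, c ∈ K, s ∈ 𝔞, and suppose ⁅(c, s, 0), f⁆_𝔤 = (ad_𝔤 (0,a,0))^p f for all f ∈ 𝔤. Then ⁅s, b⁆ = (ad a)^p b for all b ∈ 𝔞 and D s = (ad a)^{p−1} (D a). -/
section DoubleExtension

variable {K : Type*} [Field K] {L : Type*} [LieRing L] [LieAlgebra K L]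
  (B : L →ₗ[K] L →ₗ[K] K) (D : L →ₗ[K] L)

/-- `ad (u, x, 0)` on the quotient of the double extension by its central line `K × 0 × 0`,
identified with `𝔞 × K`. -/
def doubleExtAdModCenter (x : L) (q : L × K) : L × K :=
  (⁅x, q.1⁆ - q.2 • D x, 0)

theorem semiconj_snd_doubleExtBracket (u : K) (x : L) :
    Function.Semiconj Prod.snd (doubleExtBracket B D (u, x, 0)) (doubleExtAdModCenter D x) := by
  intro g
  simp [doubleExtBracket, doubleExtAdModCenter]

theorem semiconj_doubleExtAdModCenter (x : L) :
    Function.Semiconj (fun y : L => (y, (0 : K))) (fun y => ⁅x, y⁆) (doubleExtAdModCenter D x) := by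
  intro y
  simp [doubleExtAdModCenter]

theorem doubleExtAdModCenter_zero_one (x : L) :
    doubleExtAdModCenter D x ((0 : L), (1 : K)) = (-D x, 0) := by
  simp [doubleExtAdModCenter]

theorem doubleExtAdModCenter_iterate_inl (x : L) (n : ℕ) (y : L) :
    (doubleExtAdModCenter D x)^[n] (y, (0 : K)) = ((fun z => ⁅x, z⁆)^[n] y, 0) :=
  ((semiconj_doubleExtAdModCenter D x).iterate_right n y).symm

end DoubleExtension

theorem iterate_lie_neg {L : Type*} [LieRing L] (x : L) (n : ℕ) (y : L) :
    (fun z => ⁅x, z⁆)^[n] (-y) = -(fun z => ⁅x, z⁆)^[n] y :=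
  (Function.Commute.iterate_left (f := fun z => ⁅x, z⁆) (fun z => lie_neg x z) n) y

theorem p_power_element_of_iterated_ad_general
    {K : Type*} [Field K] (p : ℕ) (hp : Nat.Prime p)
    {L : Type*} [LieRing L] [LieAlgebra K L]
    (B : L →ₗ[K] L →ₗ[K] K)
    (D : L →ₗ[K] L)
    (a : L) (c : K) (s : L)
    (h : ∀ f : K × L × K,
      doubleExtBracket B D (c, s, (0 : K)) f =
        (fun g : K × L × K => doubleExtBracket B D ((0 : K), a, (0 : K)) g)^[p] f) :
    (∀ b : L, ⁅s, b⁆ = (fun y : L => ⁅a, y⁆)^[p] b) ∧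
      D s = (fun y : L => ⁅a, y⁆)^[p - 1] (D a) := by
  have hmod : ∀ f : K × L × K,
      doubleExtAdModCenter D s f.2 = (doubleExtAdModCenter D a)^[p] f.2 := fun f => by
    rw [← semiconj_snd_doubleExtBracket B D c s f, h f]
    exact (semiconj_snd_doubleExtBracket B D 0 a).iterate_right p f
  constructor
  · intro b
    have hb := hmod (0, b, 0)
    rw [doubleExtAdModCenter_iterate_inl] at hb
    simpa [doubleExtAdModCenter] using hb
  · obtain ⟨n, rfl⟩ := Nat.exists_eq_succ_of_ne_zero hp.ne_zero
    have hD : (-D s, (0 : K)) = (-(fun y => ⁅a, y⁆)^[n] (D a), 0) :=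
      calc (-D s, (0 : K))
          = doubleExtAdModCenter D s (0, 1) := (doubleExtAdModCenter_zero_one D s).symm
        _ = (doubleExtAdModCenter D a)^[n] (doubleExtAdModCenter D a (0, 1)) := hmod (0, 0, 1)
        _ = (-(fun y => ⁅a, y⁆)^[n] (D a), 0) := by
          rw [doubleExtAdModCenter_zero_one, doubleExtAdModCenter_iterate_inl, iterate_lie_neg]
    simpa using hD

theorem p_power_element_of_iterated_ad
    {K : Type*} [Field K] (p : ℕ) (hp : Nat.Prime p) (hp2 : p ≠ 2) [CharP K p]
    {L : Type*} [LieRing L] [LieAlgebra K L]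
    (B : L →ₗ[K] L →ₗ[K] K)
    (hsym : ∀ a b : L, B a b = B b a)
    (hinv : ∀ a b c : L, B ⁅a, b⁆ c = B a ⁅b, c⁆)
    (D : L →ₗ[K] L)
    (hder : ∀ a b : L, D ⁅a, b⁆ = ⁅D a, b⁆ + ⁅a, D b⁆)
    (hDinv : ∀ a b : L, B (D a) b + B a (D b) = 0)
    (a : L) (c : K) (s : L)
    (h : ∀ f : K × L × K,
      doubleExtBracket B D (c, s, (0 : K)) f =
        (fun g : K × L × K => doubleExtBracket B D ((0 : K), a, (0 : K)) g)^[p] f) :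
    (∀ b : L, ⁅s, b⁆ = (fun y : L => ⁅a, y⁆)^[p] b) ∧
      D s = (fun y : L => ⁅a, y⁆)^[p - 1] (D a) :=
  p_power_element_of_iterated_ad_general p hp B D a c s h
end

section
/- Let (𝔤, B) be a finite-dimensional NIS-algebra over a field K with char K ≠ 2, with dim 𝔤 > 1, which is irreducible: every Lie ideal I of 𝔤 such that 𝔤 is the internal direct sum of I and its B-orthogonal complement I^⊥ := {g ∈ 𝔤 : B g i = 0 for all i ∈ I} satisfies I = 0 or I = 𝔤. Let x ∈ 𝔤 be nonzero with ⁅x, g⁆ = 0 for all g ∈ 𝔤. Then: (1) B x x = 0; (2) there exists x* ∈ 𝔤 with B x x* = 1 and B x* x* = 0; and, setting 𝔞 := {a ∈ 𝔤 : B x a = 0 and B x* a = 0}, (3) 𝔤 is the internal direct sum of the subspaces K • x, 𝔞 and K • x*; (4) ⁅x*, a⁆ ∈ 𝔞 for all a ∈ 𝔞; (5) for all a, b ∈ 𝔞 the element [a,b]₀ := ⁅a,b⁆ − (B ⁅x*,a⁆ b) • x lies in 𝔞, and the bracket [·,·]₀ on 𝔞 is alternating and satisfies the Jacobi identity, so (𝔞,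 [·,·]₀) is a Lie algebra; (6) the map D : 𝔞 → 𝔞, D a := ⁅x*, a⁆, is a derivation of (𝔞, [·,·]₀); (7) the restriction B_𝔞 of B to 𝔞 is symmetric, nondegenerate, invariant for [·,·]₀, and D-invariant: B (D a) b + B a (D b) = 0 for all a, b ∈ 𝔞. -/
/-!
If a central element `x` were anisotropic, `K ∙ x` would be a Lie ideal complementing its
orthogonal, which irreducibility forbids once `dim 𝔤 > 1`. So `x` is isotropic, and
nondegeneracy provides a partner `x*` with `B x x* = 1`, `B x* x* = 0`, splitting
`𝔤 = K x ⊕ 𝔞 ⊕ K x*`. By invariance `B ⁅x*, a⁆ b = B x* ⁅a, b⁆`, so `[a, b]₀ = P ⁅a, b⁆` for the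
linear projection `P g = g - B x* g • x`. As `x` is central, `⁅a, P g⁆ = ⁅a, g⁆`, and the Jacobi
identity and the derivation property of `[·,·]₀` are the images under `P` of the Leibniz rule
for `⁅·,·⁆`.
-/

namespace NISAlgebra

open LinearMap (BilinForm)

variable {K G : Type*} [Field K] [LieRing G] [LieAlgebra K G] {B : BilinForm K G}

variable (K) in
def centralLine (x : G) (hxc : ∀ g : G, ⁅x, g⁆ = 0) : LieIdeal K G where
  toSubmodule := K ∙ x
  lie_mem {g m} hm := by
    obtain ⟨c, rfl⟩ := Submodule.mem_span_singleton.mp hm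
    rw [lie_smul, ← lie_skew, hxc, neg_zero, smul_zero]
    exact Submodule.zero_mem _

theorem eq_bot_or_eq_top_of_isCompl_orthogonal (hsym : ∀ a b : G, B a b = B b a)
    (hirr : ∀ I : LieIdeal K G,
      (∀ g : G, ∃ i ∈ I, ∃ j : G, (∀ i' ∈ I, B j i' = 0) ∧ g = i + j) →
      (∀ i ∈ I, (∀ i' ∈ I, B i i' = 0) → i = 0) →
      I = ⊥ ∨ I = ⊤)
    (I : LieIdeal K G) (hI : IsCompl I.toSubmodule (B.orthogonal I.toSubmodule)) :
    I = ⊥ ∨ I = ⊤ := by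
  refine hirr I (fun g => ?_) (fun i hi hperp => ?_)
  · obtain ⟨i, hi, j, hj, rfl⟩ :=
      Submodule.mem_sup.mp (hI.sup_eq_top ▸ Submodule.mem_top (x := g))
    exact ⟨i, hi, j, fun i' hi' => (hsym j i').trans (hj i' hi'), rfl⟩
  · have hi' : i ∈ B.orthogonal I.toSubmodule := fun i' hi' => (hsym i' i).trans (hperp i' hi')
    have hmem := Submodule.mem_inf.mpr ⟨hi, hi'⟩
    rwa [hI.inf_eq_bot, Submodule.mem_bot] at hmem

theorem apply_self_eq_zero_of_central (hdim : 1 < Module.finrank K G)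
    (hsym : ∀ a b : G, B a b = B b a)
    (hirr : ∀ I : LieIdeal K G,
      (∀ g : G, ∃ i ∈ I, ∃ j : G, (∀ i' ∈ I, B j i' = 0) ∧ g = i + j) →
      (∀ i ∈ I, (∀ i' ∈ I, B i i' = 0) → i = 0) →
      I = ⊥ ∨ I = ⊤)
    {x : G} (hx0 : x ≠ 0) (hxc : ∀ g : G, ⁅x, g⁆ = 0) : B x x = 0 := by
  by_contra hxx
  rcases eq_bot_or_eq_top_of_isCompl_orthogonal hsym hirr (centralLine K x hxc)
    (BilinForm.isCompl_span_singleton_orthogonal hxx) with hbot | htop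
  · have hx : x ∈ centralLine K x hxc := Submodule.mem_span_singleton_self x
    exact hx0 (by simpa [hbot] using hx)
  · have hspan : (K ∙ x) = ⊤ := congrArg LieSubmodule.toSubmodule htop
    have hrank := finrank_span_singleton (K := K) hx0
    rw [hspan, finrank_top] at hrank
    omega

theorem exists_hyperbolic_partner (hchar : (2 : K) ≠ 0) (hsym : ∀ a b : G, B a b = B b a)
    (hnd : ∀ a : G, (∀ b : G, B a b = 0) → a = 0) {x : G} (hx0 : x ≠ 0) (hxx : B x x = 0) :
    ∃ xs : G, B x xs = 1 ∧ B xs xs = 0 := by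
  obtain ⟨y, hy⟩ : ∃ y, B x y ≠ 0 := by
    by_contra! h
    exact hx0 (hnd x h)
  set z := (B x y)⁻¹ • y
  have hxz : B x z = 1 := by simp [z, hy]
  refine ⟨z - (B z z / 2) • x, ?_, ?_⟩
  · simp [hxz, hxx]
  · simp only [map_sub, map_smul, LinearMap.sub_apply, LinearMap.smul_apply, smul_eq_mul,
      hxz, hsym z x, hxx]
    field_simp
    ring

theorem apply_lie_self_eq_zero (hinv : ∀ a b c : G, B ⁅a, b⁆ c = B a ⁅b, c⁆) (a b : G) :
    B a ⁅a, b⁆ = 0 := by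
  rw [← hinv, lie_self, map_zero, LinearMap.zero_apply]

theorem apply_lie_add_apply_lie (hinv : ∀ a b c : G, B ⁅a, b⁆ c = B a ⁅b, c⁆) (d a b : G) :
    B ⁅d, a⁆ b + B a ⁅d, b⁆ = 0 := by
  rw [← hinv a, ← lie_skew, map_neg, LinearMap.neg_apply, neg_add_cancel]

theorem apply_lie_eq_zero_of_central (hinv : ∀ a b c : G, B ⁅a, b⁆ c = B a ⁅b, c⁆) {x : G}
    (hxc : ∀ g : G, ⁅x, g⁆ = 0) (a b : G) :
    B x ⁅a, b⁆ = 0 := by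
  rw [← hinv, hxc, map_zero, LinearMap.zero_apply]

/-- When `B xs x = 1` this is the projection onto `B.orthogonal (K ∙ xs)` with kernel `K ∙ x`;
the bracket `[a, b]₀` of the double extension is `projAlong B x xs ⁅a, b⁆`. -/
def projAlong (B : BilinForm K G) (x xs : G) : G →ₗ[K] G :=
  LinearMap.id - (B xs).smulRight x

variable {x xs : G}

@[simp]
theorem projAlong_apply (g : G) : projAlong B x xs g = g - B xs g • x := rfl

theorem projAlong_lie (hinv : ∀ a b c : G, B ⁅a, b⁆ c = B a ⁅b, c⁆) (a b : G) :
    projAlong B x xs ⁅a, b⁆ = ⁅a, b⁆ - B ⁅xs, a⁆ b • x := by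
  rw [projAlong_apply, hinv]

theorem lie_projAlong (hxc : ∀ g : G, ⁅x, g⁆ = 0) (a g : G) :
    ⁅a, projAlong B x xs g⁆ = ⁅a, g⁆ := by
  rw [projAlong_apply, lie_sub, lie_smul, ← lie_skew a x, hxc, neg_zero, smul_zero, sub_zero]

theorem projAlong_leibniz_lie (hxc : ∀ g : G, ⁅x, g⁆ = 0) (a b c : G) :
    projAlong B x xs ⁅a, projAlong B x xs ⁅b, c⁆⁆ =
      projAlong B x xs ⁅projAlong B x xs ⁅a, b⁆, c⁆ +
        projAlong B x xs ⁅b, projAlong B x xs ⁅a, c⁆⁆ := by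
  rw [lie_projAlong hxc, lie_projAlong hxc, ← lie_skew (projAlong B x xs _), lie_projAlong hxc,
    lie_skew, ← map_add, leibniz_lie]

theorem projAlong_lie_left_eq_self (hinv : ∀ a b c : G, B ⁅a, b⁆ c = B a ⁅b, c⁆) (g : G) :
    projAlong B x xs ⁅xs, g⁆ = ⁅xs, g⁆ := by
  rw [projAlong_apply, apply_lie_self_eq_zero hinv, zero_smul, sub_zero]

theorem lie_projAlong_lie (hinv : ∀ a b c : G, B ⁅a, b⁆ c = B a ⁅b, c⁆)
    (hxc : ∀ g : G, ⁅x, g⁆ = 0) (a b : G) :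
    ⁅xs, projAlong B x xs ⁅a, b⁆⁆ =
      projAlong B x xs ⁅⁅xs, a⁆, b⁆ + projAlong B x xs ⁅a, ⁅xs, b⁆⁆ := by
  rw [lie_projAlong hxc, ← map_add, ← leibniz_lie, projAlong_lie_left_eq_self hinv]

theorem apply_projAlong_of_apply_eq_one (h : B xs x = 1) (g : G) :
    B xs (projAlong B x xs g) = 0 := by
  simp [h]

theorem apply_projAlong_left {c : G} (hc : B x c = 0) (g : G) :
    B (projAlong B x xs g) c = B g c := by
  simp [hc]

theorem apply_projAlong_right {a : G} (ha : B a x = 0) (g : G) :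
    B a (projAlong B x xs g) = B a g := by
  simp [ha]

theorem exists_eq_smul_add_add_smul (hsym : ∀ a b : G, B a b = B b a) (hxx : B x x = 0)
    (hxxs : B x xs = 1) (hxsxs : B xs xs = 0) (g : G) :
    ∃ (u v : K) (a : G), (B x a = 0 ∧ B xs a = 0) ∧ g = u • x + a + v • xs := by
  refine ⟨B xs g, B x g, g - B xs g • x - B x g • xs, ⟨?_, ?_⟩, by abel⟩
  · simp [hxx, hxxs]
  · simp [hsym xs x, hxxs, hxsxs]

theorem eq_zero_of_smul_add_add_smul_eq_zero (hsym : ∀ a b : G, B a b = B b a)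
    (hxx : B x x = 0) (hxxs : B x xs = 1) (hxsxs : B xs xs = 0) {u v : K} {a : G}
    (ha : B x a = 0 ∧ B xs a = 0) (h : u • x + a + v • xs = 0) : u = 0 ∧ a = 0 ∧ v = 0 := by
  have hu : u = 0 := by simpa [hsym xs x, hxxs, hxsxs, ha.2] using congrArg (B xs) h
  have hv : v = 0 := by simpa [hxx, hxxs, ha.1] using congrArg (B x) h
  subst hu hv
  simpa using h

theorem eq_zero_of_forall_apply_eq_zero (hsym : ∀ a b : G, B a b = B b a)
    (hnd : ∀ a : G, (∀ b : G, B a b = 0) → a = 0) (hxx : B x x = 0) (hxxs : B x xs = 1)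
    (hxsxs : B xs xs = 0) {a : G} (ha : B x a = 0 ∧ B xs a = 0)
    (h : ∀ b : G, (B x b = 0 ∧ B xs b = 0) → B a b = 0) : a = 0 := by
  refine hnd a fun g => ?_
  obtain ⟨u, v, b, hb, rfl⟩ := exists_eq_smul_add_add_smul hsym hxx hxxs hxsxs g
  simp [hsym a x, hsym a xs, ha.1, ha.2, h b hb]

end NISAlgebra

open NISAlgebra

theorem restricted_NIS_algebra_is_double_extension_data_general
    {K : Type*} [Field K] (hchar : (2 : K) ≠ 0)
    {G : Type*} [LieRing G] [LieAlgebra K G]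
    (hdim : 1 < Module.finrank K G)
    (B : G →ₗ[K] G →ₗ[K] K)
    (hsym : ∀ a b : G, B a b = B b a)
    (hinv : ∀ a b c : G, B ⁅a, b⁆ c = B a ⁅b, c⁆)
    (hnd : ∀ a : G, (∀ b : G, B a b = 0) → a = 0)
    -- irreducibility: any Lie ideal `I` such that `G` is the internal direct sum of
    -- `I` and its `B`-orthogonal complement is trivial.
    (hirr : ∀ I : LieIdeal K G,
      (∀ g : G, ∃ i ∈ I, ∃ j : G, (∀ i' ∈ I, B j i' = 0) ∧ g = i + j) →
      (∀ i ∈ I, (∀ i' ∈ I, B i i' = 0) → i = 0) →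
      I = ⊥ ∨ I = ⊤)
    (x : G) (hx0 : x ≠ 0) (hxc : ∀ g : G, ⁅x, g⁆ = 0) :
    -- (1)
    B x x = 0 ∧
    -- (2)
    ∃ xs : G, B x xs = 1 ∧ B xs xs = 0 ∧
    ∃ br0 : G → G → G,
      (∀ a b : G, br0 a b = ⁅a, b⁆ - (B ⁅xs, a⁆ b) • x) ∧
      -- (3) G is the internal direct sum of K•x, 𝔞 := {a | B x a = 0 ∧ B xs a = 0} and K•xs
      (∀ g : G, ∃ (u v : K) (a : G), (B x a = 0 ∧ B xs a = 0) ∧ g = u • x + a + v • xs) ∧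
      (∀ (u v : K) (a : G), (B x a = 0 ∧ B xs a = 0) → u • x + a + v • xs = 0 →
        u = 0 ∧ a = 0 ∧ v = 0) ∧
      -- (4) 𝔞 is stable under D := ⁅xs, ·⁆
      (∀ a : G, (B x a = 0 ∧ B xs a = 0) → B x ⁅xs, a⁆ = 0 ∧ B xs ⁅xs, a⁆ = 0) ∧
      -- (5) [·,·]₀ maps 𝔞 × 𝔞 to 𝔞, is alternating and satisfies the Jacobi identity
      (∀ a b : G, (B x a = 0 ∧ B xs a = 0) → (B x b = 0 ∧ B xs b = 0) →
        B x (br0 a b) = 0 ∧ B xs (br0 a b) = 0) ∧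
      (∀ a : G, (B x a = 0 ∧ B xs a = 0) → br0 a a = 0) ∧
      (∀ a b c : G, (B x a = 0 ∧ B xs a = 0) → (B x b = 0 ∧ B xs b = 0) →
        (B x c = 0 ∧ B xs c = 0) →
        br0 a (br0 b c) = br0 (br0 a b) c + br0 b (br0 a c)) ∧
      -- (6) D = ⁅xs, ·⁆ is a derivation of (𝔞, [·,·]₀)
      (∀ a b : G, (B x a = 0 ∧ B xs a = 0) → (B x b = 0 ∧ B xs b = 0) →
        ⁅xs, br0 a b⁆ = br0 ⁅xs, a⁆ b + br0 a ⁅xs, b⁆) ∧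
      -- (7) properties of the restriction of B to 𝔞
      (∀ a b : G, (B x a = 0 ∧ B xs a = 0) → (B x b = 0 ∧ B xs b = 0) → B a b = B b a) ∧
      (∀ a : G, (B x a = 0 ∧ B xs a = 0) →
        (∀ b : G, (B x b = 0 ∧ B xs b = 0) → B a b = 0) → a = 0) ∧
      (∀ a b c : G, (B x a = 0 ∧ B xs a = 0) → (B x b = 0 ∧ B xs b = 0) →
        (B x c = 0 ∧ B xs c = 0) → B (br0 a b) c = B a (br0 b c)) ∧
      (∀ a b : G, (B x a = 0 ∧ B xs a = 0) → (B x b = 0 ∧ B xs b = 0) →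
        B ⁅xs, a⁆ b + B a ⁅xs, b⁆ = 0) := by
  have hxx := apply_self_eq_zero_of_central hdim hsym hirr hx0 hxc
  obtain ⟨xs, hxxs, hxsxs⟩ := exists_hyperbolic_partner hchar hsym hnd hx0 hxx
  have hxsx : B xs x = 1 := (hsym xs x).trans hxxs
  refine ⟨hxx, xs, hxxs, hxsxs, fun a b => projAlong B x xs ⁅a, b⁆, projAlong_lie hinv,
    exists_eq_smul_add_add_smul hsym hxx hxxs hxsxs,
    fun _ _ _ => eq_zero_of_smul_add_add_smul_eq_zero hsym hxx hxxs hxsxs,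
    fun a _ => ⟨apply_lie_eq_zero_of_central hinv hxc xs a, apply_lie_self_eq_zero hinv xs a⟩,
    fun a b _ _ => ⟨(apply_projAlong_right hxx _).trans
      (apply_lie_eq_zero_of_central hinv hxc a b), apply_projAlong_of_apply_eq_one hxsx _⟩,
    fun a _ => by simp, fun a b c _ _ _ => projAlong_leibniz_lie hxc a b c,
    fun a b _ _ => lie_projAlong_lie hinv hxc a b, fun a b _ _ => hsym a b,
    fun a => eq_zero_of_forall_apply_eq_zero hsym hnd hxx hxxs hxsxs,
    fun a b c ha _ hc => ?_, fun a b _ _ => apply_lie_add_apply_lie hinv xs a b⟩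
  rw [apply_projAlong_left hc.1, apply_projAlong_right ((hsym a x).trans ha.1), hinv]

theorem restricted_NIS_algebra_is_double_extension_data
    {K : Type*} [Field K] (hchar : (2 : K) ≠ 0)
    {G : Type*} [LieRing G] [LieAlgebra K G] [FiniteDimensional K G]
    (hdim : 1 < Module.finrank K G)
    (B : G →ₗ[K] G →ₗ[K] K)
    (hsym : ∀ a b : G, B a b = B b a)
    (hinv : ∀ a b c : G, B ⁅a, b⁆ c = B a ⁅b, c⁆)
    (hnd : ∀ a : G, (∀ b : G, B a b = 0) → a = 0)
    -- irreducibility: any Lie ideal `I` such that `G` is the internal direct sum of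
    -- `I` and its `B`-orthogonal complement is trivial.
    (hirr : ∀ I : LieIdeal K G,
      (∀ g : G, ∃ i ∈ I, ∃ j : G, (∀ i' ∈ I, B j i' = 0) ∧ g = i + j) →
      (∀ i ∈ I, (∀ i' ∈ I, B i i' = 0) → i = 0) →
      I = ⊥ ∨ I = ⊤)
    (x : G) (hx0 : x ≠ 0) (hxc : ∀ g : G, ⁅x, g⁆ = 0) :
    -- (1)
    B x x = 0 ∧
    -- (2)
    ∃ xs : G, B x xs = 1 ∧ B xs xs = 0 ∧
    ∃ br0 : G → G → G,
      (∀ a b : G, br0 a b = ⁅a, b⁆ - (B ⁅xs, a⁆ b) • x) ∧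
      -- (3) G is the internal direct sum of K•x, 𝔞 := {a | B x a = 0 ∧ B xs a = 0} and K•xs
      (∀ g : G, ∃ (u v : K) (a : G), (B x a = 0 ∧ B xs a = 0) ∧ g = u • x + a + v • xs) ∧
      (∀ (u v : K) (a : G), (B x a = 0 ∧ B xs a = 0) → u • x + a + v • xs = 0 →
        u = 0 ∧ a = 0 ∧ v = 0) ∧
      -- (4) 𝔞 is stable under D := ⁅xs, ·⁆
      (∀ a : G, (B x a = 0 ∧ B xs a = 0) → B x ⁅xs, a⁆ = 0 ∧ B xs ⁅xs, a⁆ = 0) ∧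
      -- (5) [·,·]₀ maps 𝔞 × 𝔞 to 𝔞, is alternating and satisfies the Jacobi identity
      (∀ a b : G, (B x a = 0 ∧ B xs a = 0) → (B x b = 0 ∧ B xs b = 0) →
        B x (br0 a b) = 0 ∧ B xs (br0 a b) = 0) ∧
      (∀ a : G, (B x a = 0 ∧ B xs a = 0) → br0 a a = 0) ∧
      (∀ a b c : G, (B x a = 0 ∧ B xs a = 0) → (B x b = 0 ∧ B xs b = 0) →
        (B x c = 0 ∧ B xs c = 0) →
        br0 a (br0 b c) = br0 (br0 a b) c + br0 b (br0 a c)) ∧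
      -- (6) D = ⁅xs, ·⁆ is a derivation of (𝔞, [·,·]₀)
      (∀ a b : G, (B x a = 0 ∧ B xs a = 0) → (B x b = 0 ∧ B xs b = 0) →
        ⁅xs, br0 a b⁆ = br0 ⁅xs, a⁆ b + br0 a ⁅xs, b⁆) ∧
      -- (7) properties of the restriction of B to 𝔞
      (∀ a b : G, (B x a = 0 ∧ B xs a = 0) → (B x b = 0 ∧ B xs b = 0) → B a b = B b a) ∧
      (∀ a : G, (B x a = 0 ∧ B xs a = 0) →
        (∀ b : G, (B x b = 0 ∧ B xs b = 0) → B a b = 0) → a = 0) ∧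
      (∀ a b c : G, (B x a = 0 ∧ B xs a = 0) → (B x b = 0 ∧ B xs b = 0) →
        (B x c = 0 ∧ B xs c = 0) → B (br0 a b) c = B a (br0 b c)) ∧
      (∀ a b : G, (B x a = 0 ∧ B xs a = 0) → (B x b = 0 ∧ B xs b = 0) →
        B ⁅xs, a⁆ b + B a ⁅xs, b⁆ = 0) :=
  restricted_NIS_algebra_is_double_extension_data_general hchar hdim B hsym hinv hnd hirr x hx0 hxc
end
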